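/- arXiv:1408.6645 — 2 statements merged into one kernel-verified Lean document; each statement's English description precedes it below -/
import Mathlib

section
/- Let μ and ν be Radon measures on ℝⁿ whose restrictions to the open unit ball 𝔹 = B(0,1) are probability measures, and let W₁(μ,ν) = sup_ψ |∫ψ dμ − ∫ψ dν| where the supremum is over 1-Lipschitz functions ψ : ℝⁿ → ℝ supported on 𝔹. Let φ : closure(𝔹) → [0,1] be L-Lipschitz with φ = 1 on the boundary ∂𝔹. Define F(t) = μ(φ⁻¹([0,t))) and G(t) = ν(φ⁻¹([0,t))) for t ∈ [0,1]. Then ∫₀¹ |F(t) − G(t)| dt ≤ L · W₁(μ,ν). -/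
open MeasureTheory Metric Set
open scoped ENNReal NNReal

/-!
Let `s = sign (F - G)` on `[0, 1]` and `S u = ∫_u^1 s`. By Fubini, `∫_𝔹 S ∘ φ dμ = ∫₀¹ s F`, so
`∫₀¹ |F - G| = ∫ ψ dμ - ∫ ψ dν` for `ψ = S ∘ φ` on `𝔹` and `ψ = 0` outside. Since `S` is
`1`-Lipschitz and `S 1 = 0 = S (φ x)` for `x ∈ ∂𝔹`, `ψ` is `L`-Lipschitz: a segment leaving `𝔹`
crosses `∂𝔹`, where `ψ` vanishes. Hence `ψ / L` is a competitor in `W₁(μ, ν)`.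
-/

/-- The restricted `L¹`-Wasserstein distance: the supremum of `|∫ψ dμ − ∫ψ dν|` over
`1`-Lipschitz functions `ψ` supported in the open unit ball. -/
noncomputable def W1 {n : ℕ} (μ ν : Measure (EuclideanSpace ℝ (Fin n))) : ℝ :=
  sSup {a : ℝ | ∃ ψ : EuclideanSpace ℝ (Fin n) → ℝ,
    LipschitzWith 1 ψ ∧ (∀ x ∉ ball (0 : EuclideanSpace ℝ (Fin n)) 1, ψ x = 0) ∧
    a = |(∫ x, ψ x ∂μ) - ∫ x, ψ x ∂ν|}

theorem IsPreconnected.inter_frontier_nonempty {X : Type*} [TopologicalSpace X] {s t : Set X}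
    (ht : IsPreconnected t) {x y : X} (hxt : x ∈ t) (hxs : x ∈ s) (hyt : y ∈ t) (hys : y ∉ s) :
    (t ∩ frontier s).Nonempty := by
  by_contra h
  have hcover : t ⊆ interior s ∪ interior sᶜ := fun z hz => by
    by_cases hzs : z ∈ interior s
    · exact Or.inl hzs
    · refine Or.inr ?_
      rw [interior_compl]
      exact fun hzc => h ⟨z, hz, hzc, hzs⟩
  have hdisj : Disjoint (interior s) (interior sᶜ) :=
    (disjoint_compl_right.mono_left interior_subset).mono_right interior_subset
  rcases ht.subset_or_subset isOpen_interior isOpen_interior hdisj hcover with hs | hsc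
  · exact hys (interior_subset (hs hyt))
  · exact interior_subset (hsc hxt) hxs

theorem LipschitzOnWith.lipschitzWith_indicator {E F : Type*} [SeminormedAddCommGroup E]
    [NormedSpace ℝ E] [SeminormedAddCommGroup F] {s : Set E} {f : E → F} {K : ℝ≥0}
    (hf : LipschitzOnWith K f (closure s)) (h0 : ∀ x ∈ frontier s, f x = 0) :
    LipschitzWith K (s.indicator f) := by
  have hcross : ∀ x ∈ s, ∀ y ∉ s, dist (f x) 0 ≤ K * dist x y := by
    intro x hx y hy
    obtain ⟨z, hzseg, hzfr⟩ := (convex_segment x y).isPreconnected.inter_frontier_nonempty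
      (left_mem_segment ℝ x y) hx (right_mem_segment ℝ x y) hy
    calc dist (f x) 0 = dist (f x) (f z) := by rw [h0 z hzfr]
      _ ≤ K * dist x z := hf.dist_le_mul x (subset_closure hx) z (frontier_subset_closure hzfr)
      _ ≤ K * dist x y := by
        gcongr
        linarith [dist_add_dist_of_mem_segment hzseg, dist_nonneg (x := z) (y := y)]
  refine LipschitzWith.of_dist_le_mul fun x y => ?_
  by_cases hx : x ∈ s <;> by_cases hy : y ∈ s <;>
    simp only [indicator_of_mem, indicator_of_notMem, hx, hy, not_false_eq_true]
  · exact hf.dist_le_mul x (subset_closure hx) y (subset_closure hy)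
  · exact hcross x hx y hy
  · rw [dist_comm, dist_comm x]; exact hcross y hy x hx
  · rw [dist_self]; positivity

theorem lipschitzWith_intervalIntegral_of_norm_le {E : Type*} [NormedAddCommGroup E]
    [NormedSpace ℝ E] {s : ℝ → E} {K : ℝ≥0} (hs : ∀ a b, IntervalIntegrable s volume a b)
    (hK : ∀ t, ‖s t‖ ≤ K) (c : ℝ) : LipschitzWith K (fun u => ∫ t in u..c, s t) := by
  refine LipschitzWith.of_dist_le_mul fun u v => ?_
  rw [dist_eq_norm, ← intervalIntegral.integral_add_adjacent_intervals (hs u v) (hs v c),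
    add_sub_cancel_right, Real.dist_eq, abs_sub_comm]
  exact intervalIntegral.norm_integral_le_of_norm_le_const fun t _ => hK t

theorem LipschitzWith.lipschitzWith_indicator_intervalIntegral {E : Type*}
    [SeminormedAddCommGroup E] [NormedSpace ℝ E] {U : Set E} {g : E → ℝ} {K : ℝ≥0}
    (hg : LipschitzWith K g) {c : ℝ} (hgc : ∀ x ∈ frontier U, g x = c) {s : ℝ → ℝ}
    (hs : ∀ a b, IntervalIntegrable s volume a b) (hs_norm : ∀ t, ‖s t‖ ≤ 1) :
    LipschitzWith K (U.indicator fun x => ∫ t in g x..c, s t) := by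
  have hS := lipschitzWith_intervalIntegral_of_norm_le (K := 1) hs (by simpa using hs_norm) c
  have := (hS.comp hg).lipschitzOnWith (s := closure U)
  rw [one_mul] at this
  exact this.lipschitzWith_indicator fun x hx => by
    rw [Function.comp_apply, hgc x hx, intervalIntegral.integral_same]

theorem exists_abs_sub_eq_mul_sub_mul {F G : ℝ → ℝ} (hF : Measurable F) (hG : Measurable G) :
    ∃ s : ℝ → ℝ, (∀ a b, IntervalIntegrable s volume a b) ∧ (∀ t, ‖s t‖ ≤ 1) ∧
      ∀ t, |F t - G t| = s t * F t - s t * G t := by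
  set s : ℝ → ℝ := fun t => if G t ≤ F t then 1 else -1
  have hs_norm : ∀ t, ‖s t‖ ≤ 1 := fun t => by
    by_cases h : G t ≤ F t <;> simp [s, h]
  have hs_meas : Measurable s :=
    Measurable.ite (measurableSet_le hG hF) measurable_const measurable_const
  refine ⟨s, fun a b => ?_, hs_norm, fun t => ?_⟩
  · exact intervalIntegrable_const.mono_fun' hs_meas.aestronglyMeasurable (ae_of_all _ hs_norm)
  · simp only [s]
    split_ifs with h
    · rw [abs_of_nonneg (sub_nonneg.2 h)]; ring
    · rw [abs_of_neg (sub_neg.2 (not_le.1 h))]; ring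

theorem measureReal_restrict_setOf_lt_of_eqOn {X : Type*} [MeasurableSpace X] (m : Measure X)
    {U : Set X} {φ g : X → ℝ} (hg : Measurable g) (hφg : EqOn φ g U) (t : ℝ) :
    (m.restrict U).real {x | g x < t} = (m (U ∩ {x | φ x < t})).toReal := by
  rw [measureReal_def, Measure.restrict_apply (measurableSet_lt hg measurable_const),
    inter_comm _ U]
  exact congrArg (fun A => (m A).toReal) (hφg.inter_preimage_eq (Iio t)).symm

section LayerCake

variable {X : Type*} [MeasurableSpace X] (m : Measure X) [IsFiniteMeasure m] {s : ℝ → ℝ}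
  {a b : ℝ}

theorem monotone_measureReal_lt (f : X → ℝ) : Monotone fun t => m.real {x | f x < t} :=
  fun _ _ htt' => measureReal_mono fun _ hx => lt_of_lt_of_le hx htt'

theorem intervalIntegrable_mul_measureReal_lt (f : X → ℝ) (hab : a ≤ b)
    (hs : IntervalIntegrable s volume a b) :
    IntervalIntegrable (fun t => s t * m.real {x | f x < t}) volume a b := by
  refine (intervalIntegrable_iff_integrableOn_Ioc_of_le hab).2 <|
    hs.1.mul_bdd (monotone_measureReal_lt m f).measurable.aestronglyMeasurable (c := m.real univ)
      (ae_of_all _ fun t => ?_)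
  rw [Real.norm_of_nonneg measureReal_nonneg]
  exact measureReal_mono (subset_univ _)

theorem integral_mul_measureReal_lt {f : X → ℝ} (hf : Measurable f) (hab : a ≤ b)
    (hfab : ∀ᵐ x ∂m, f x ∈ Icc a b) (hs : IntervalIntegrable s volume a b) :
    ∫ t in a..b, s t * m.real {x | f x < t} = ∫ x, (∫ t in f x..b, s t) ∂m := by
  set k : ℝ → X → ℝ := fun t x => {p : ℝ × X | f p.2 < p.1}.indicator (fun p => s p.1) (t, x)
  have hk : Integrable (Function.uncurry k) ((volume.restrict (Ioc a b)).prod m) :=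
    (hs.1.comp_fst m).indicator (measurableSet_lt (hf.comp measurable_snd) measurable_fst)
  have hk_left : ∀ t, ∫ x, k t x ∂m = s t * m.real {x | f x < t} := fun t => by
    have : ∀ x, k t x = {x | f x < t}.indicator (fun _ => s t) x := fun x => rfl
    simp only [this, integral_indicator_const _ (measurableSet_lt hf measurable_const),
      smul_eq_mul, mul_comm]
  have hk_right : ∀ x, f x ∈ Icc a b → ∫ t in Ioc a b, k t x = ∫ t in f x..b, s t := by
    rintro x ⟨hax, hxb⟩
    have : ∀ t, k t x = (Ioi (f x)).indicator s t := fun t => rfl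
    simp only [this, setIntegral_indicator measurableSet_Ioi, Ioc_inter_Ioi, sup_of_le_right hax,
      intervalIntegral.integral_of_le hxb]
  calc ∫ t in a..b, s t * m.real {x | f x < t} = ∫ t in Ioc a b, ∫ x, k t x ∂m := by
        simp only [hk_left, intervalIntegral.integral_of_le hab]
    _ = ∫ x, (∫ t in Ioc a b, k t x) ∂m := integral_integral_swap hk
    _ = ∫ x, (∫ t in f x..b, s t) ∂m := integral_congr_ae (hfab.mono hk_right)

end LayerCake

theorem LipschitzWith.abs_integral_sub_le {X : Type*} [PseudoMetricSpace X] [MeasurableSpace X]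
    [OpensMeasurableSpace X] (m : Measure X) [IsProbabilityMeasure m] {ψ : X → ℝ} {K : ℝ≥0}
    (hψ : LipschitzWith K ψ) {x₀ : X} {r : ℝ} (hr : ∀ᵐ x ∂m, dist x x₀ ≤ r) :
    |∫ x, ψ x ∂m - ψ x₀| ≤ K * r := by
  have hbound : ∀ᵐ x ∂m, ‖ψ x - ψ x₀‖ ≤ K * r := hr.mono fun x hx =>
    (hψ.dist_le_mul x x₀).trans (by gcongr)
  have hint : Integrable (fun x => ψ x - ψ x₀) m :=
    .of_bound (hψ.continuous.sub continuous_const).aestronglyMeasurable _ hbound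
  have hψint : Integrable ψ m :=
    (hint.add (integrable_const (ψ x₀))).congr (ae_of_all _ fun x => sub_add_cancel _ _)
  calc |∫ x, ψ x ∂m - ψ x₀| = ‖∫ x, (ψ x - ψ x₀) ∂m‖ := by
        rw [integral_sub hψint (integrable_const _), integral_const, probReal_univ, one_smul,
          Real.norm_eq_abs]
    _ ≤ K * r := by simpa using norm_integral_le_of_norm_le_const hbound

section W1

variable {n : ℕ} {μ ν : Measure (EuclideanSpace ℝ (Fin n))} {ψ : EuclideanSpace ℝ (Fin n) → ℝ}

theorem abs_integral_sub_apply_zero_le (hμ : IsProbabilityMeasure (μ.restrict (ball 0 1)))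
    {K : ℝ≥0} (hψ : LipschitzWith K ψ) (h0 : ∀ x ∉ ball 0 1, ψ x = 0) :
    |∫ x, ψ x ∂μ - ψ 0| ≤ K := by
  rw [← setIntegral_eq_integral_of_forall_compl_eq_zero h0]
  simpa using hψ.abs_integral_sub_le (μ.restrict (ball 0 1)) (r := 1)
    ((ae_restrict_mem measurableSet_ball).mono fun x hx => (mem_ball.1 hx).le)

theorem bddAbove_W1 (hμ : IsProbabilityMeasure (μ.restrict (ball 0 1)))
    (hν : IsProbabilityMeasure (ν.restrict (ball 0 1))) :
    BddAbove {a : ℝ | ∃ ψ : EuclideanSpace ℝ (Fin n) → ℝ,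
      LipschitzWith 1 ψ ∧ (∀ x ∉ ball (0 : EuclideanSpace ℝ (Fin n)) 1, ψ x = 0) ∧
      a = |(∫ x, ψ x ∂μ) - ∫ x, ψ x ∂ν|} := by
  refine ⟨2, ?_⟩
  rintro _ ⟨ψ, hψ, h0, rfl⟩
  have hμψ := abs_integral_sub_apply_zero_le hμ hψ h0
  have hνψ := abs_integral_sub_apply_zero_le hν hψ h0
  rw [abs_sub_comm] at hνψ
  norm_num at hμψ hνψ
  linarith [abs_sub_le (∫ x, ψ x ∂μ) (ψ 0) (∫ x, ψ x ∂ν)]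

theorem integral_sub_integral_le_mul_W1 (hμ : IsProbabilityMeasure (μ.restrict (ball 0 1)))
    (hν : IsProbabilityMeasure (ν.restrict (ball 0 1))) {K : ℝ≥0} (hψ : LipschitzWith K ψ)
    (h0 : ∀ x ∉ ball 0 1, ψ x = 0) :
    ∫ x, ψ x ∂μ - ∫ x, ψ x ∂ν ≤ K * W1 μ ν := by
  rcases eq_or_ne K 0 with rfl | hK
  · have hμψ := abs_integral_sub_apply_zero_le hμ hψ h0
    have hνψ := abs_integral_sub_apply_zero_le hν hψ h0
    simp only [NNReal.coe_zero, abs_nonpos_iff, sub_eq_zero] at hμψ hνψ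
    simp [hμψ, hνψ]
  set ψ₁ : EuclideanSpace ℝ (Fin n) → ℝ := fun x => (K : ℝ)⁻¹ * ψ x
  have hψ₁ : LipschitzWith 1 ψ₁ := LipschitzWith.of_dist_le_mul fun x y => by
    simp only [ψ₁, Real.dist_eq, ← mul_sub, abs_mul, abs_inv, NNReal.abs_eq, NNReal.coe_one,
      one_mul]
    rw [inv_mul_le_iff₀ (by positivity), ← Real.dist_eq]
    exact hψ.dist_le_mul x y
  have hW1 : |∫ x, ψ₁ x ∂μ - ∫ x, ψ₁ x ∂ν| ≤ W1 μ ν :=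
    le_csSup (bddAbove_W1 hμ hν) ⟨ψ₁, hψ₁, fun x hx => by simp [ψ₁, h0 x hx], rfl⟩
  calc ∫ x, ψ x ∂μ - ∫ x, ψ x ∂ν = K * (∫ x, ψ₁ x ∂μ - ∫ x, ψ₁ x ∂ν) := by
        simp only [ψ₁, integral_const_mul, ← mul_sub, ← mul_assoc,
          mul_inv_cancel₀ (NNReal.coe_ne_zero.2 hK), one_mul]
    _ ≤ K * W1 μ ν := by gcongr; exact (le_abs_self _).trans hW1

end W1

theorem stmt_1_general {n : ℕ} (μ ν : Measure (EuclideanSpace ℝ (Fin n)))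
    (hμ : IsProbabilityMeasure (μ.restrict (ball 0 1)))
    (hν : IsProbabilityMeasure (ν.restrict (ball 0 1)))
    (L : ℝ≥0) (φ : EuclideanSpace ℝ (Fin n) → ℝ)
    (hLip : LipschitzOnWith L φ (closedBall 0 1))
    (hrange : ∀ x ∈ closedBall (0 : EuclideanSpace ℝ (Fin n)) 1, φ x ∈ Icc (0 : ℝ) 1)
    (hbdry : ∀ x ∈ sphere (0 : EuclideanSpace ℝ (Fin n)) 1, φ x = 1)
    (F G : ℝ → ℝ)
    (hF : ∀ t, F t = (μ (ball 0 1 ∩ {x | φ x < t})).toReal)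
    (hG : ∀ t, G t = (ν (ball 0 1 ∩ {x | φ x < t})).toReal) :
    ∫ t in (0 : ℝ)..1, |F t - G t| ≤ (L : ℝ) * W1 μ ν := by
  obtain ⟨g, hg, hφg⟩ := hLip.extend_real
  have hg_meas : Measurable g := hg.continuous.measurable
  have hball : EqOn φ g (ball 0 1) := hφg.mono ball_subset_closedBall
  replace hF : F = fun t => (μ.restrict (ball 0 1)).real {x | g x < t} := funext fun t => by
    rw [hF, measureReal_restrict_setOf_lt_of_eqOn _ hg_meas hball]
  replace hG : G = fun t => (ν.restrict (ball 0 1)).real {x | g x < t} := funext fun t => by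
    rw [hG, measureReal_restrict_setOf_lt_of_eqOn _ hg_meas hball]
  subst hF hG
  obtain ⟨s, hs_int, hs_norm, hs_abs⟩ := exists_abs_sub_eq_mul_sub_mul
    (monotone_measureReal_lt (μ.restrict (ball 0 1)) g).measurable
    (monotone_measureReal_lt (ν.restrict (ball 0 1)) g).measurable
  set ψ := (ball (0 : EuclideanSpace ℝ (Fin n)) 1).indicator fun x => ∫ t in g x..1, s t
  have hψ : LipschitzWith L ψ := hg.lipschitzWith_indicator_intervalIntegral (fun x hx => by
    have hx : x ∈ sphere 0 1 := frontier_ball_subset_sphere hx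
    rw [← hφg (sphere_subset_closedBall hx), hbdry x hx]) hs_int hs_norm
  have hψ_integral : ∀ (m : Measure (EuclideanSpace ℝ (Fin n))),
      IsProbabilityMeasure (m.restrict (ball 0 1)) →
      ∫ x, ψ x ∂m = ∫ t in (0 : ℝ)..1, s t * (m.restrict (ball 0 1)).real {x | g x < t} := by
    intro m hm
    rw [integral_mul_measureReal_lt _ hg_meas zero_le_one _ (hs_int 0 1),
      integral_indicator measurableSet_ball]
    exact (ae_restrict_mem measurableSet_ball).mono fun x hx =>
      hball hx ▸ hrange x (ball_subset_closedBall hx)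
  calc _ = ∫ x, ψ x ∂μ - ∫ x, ψ x ∂ν := by
        rw [intervalIntegral.integral_congr fun t _ => hs_abs t, intervalIntegral.integral_sub
          (intervalIntegrable_mul_measureReal_lt _ _ zero_le_one (hs_int 0 1))
          (intervalIntegrable_mul_measureReal_lt _ _ zero_le_one (hs_int 0 1)),
          hψ_integral μ hμ, hψ_integral ν hν]
    _ ≤ L * W1 μ ν := integral_sub_integral_le_mul_W1 hμ hν hψ fun x hx => indicator_of_notMem hx _

/-- If `μ, ν` restrict to probability measures on the unit ball, `φ` is `L`-Lipschitz on the
closed unit ball, takes values in `[0,1]` there and equals `1` on the unit sphere, and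
`F(t) = μ(φ⁻¹([0,t)))`, `G(t) = ν(φ⁻¹([0,t)))`, then `∫₀¹ |F − G| ≤ L · W₁(μ,ν)`. -/
theorem stmt_1 {n : ℕ} (μ ν : Measure (EuclideanSpace ℝ (Fin n)))
    [IsLocallyFiniteMeasure μ] [IsLocallyFiniteMeasure ν]
    (hμ : IsProbabilityMeasure (μ.restrict (ball 0 1)))
    (hν : IsProbabilityMeasure (ν.restrict (ball 0 1)))
    (L : ℝ≥0) (φ : EuclideanSpace ℝ (Fin n) → ℝ)
    (hLip : LipschitzOnWith L φ (closedBall 0 1))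
    (hrange : ∀ x ∈ closedBall (0 : EuclideanSpace ℝ (Fin n)) 1, φ x ∈ Icc (0 : ℝ) 1)
    (hbdry : ∀ x ∈ sphere (0 : EuclideanSpace ℝ (Fin n)) 1, φ x = 1)
    (F G : ℝ → ℝ)
    (hF : ∀ t, F t = (μ (ball 0 1 ∩ {x | φ x < t})).toReal)
    (hG : ∀ t, G t = (ν (ball 0 1 ∩ {x | φ x < t})).toReal) :
    ∫ t in (0 : ℝ)..1, |F t - G t| ≤ (L : ℝ) * W1 μ ν :=
  stmt_1_general μ ν hμ hν L φ hLip hrange hbdry F G hF hG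
end

section
/- Let μ be a doubling measure on ℝⁿ with doubling constant C_δ, support Σ, and let 0 ≤ d ≤ n, x ∈ Σ, r > 0. Let V ∈ A'(d,n), ν_V the normalized Hausdorff measure on V∩B(0,1), and W = x + rV. Let η > 0 satisfy (2C_δ)^η = 2. Then there is a constant C, depending only on C_δ, such that for every y ∈ Σ ∩ B(x, 2r/3), dist(y, W) ≤ C · W₁(μ_{x,r}, ν_V)^η · r. -/
open MeasureTheory Metric Set
open scoped ENNReal NNReal

/-- The rescaled normalized measure `μ_{x,r}(A) = μ(x + rA) / μ(B(x,r))`. -/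
noncomputable def blowup {n : ℕ} (μ : Measure (EuclideanSpace ℝ (Fin n)))
    (x : EuclideanSpace ℝ (Fin n)) (r : ℝ) : Measure (EuclideanSpace ℝ (Fin n)) :=
  (μ (ball x r))⁻¹ • μ.map (fun y => r⁻¹ • (y - x))

/-- The normalized restriction of `ℋ^d` to a `d`-plane `V`. -/
noncomputable def nuV {n : ℕ} (d : ℝ) (V : Set (EuclideanSpace ℝ (Fin n))) :
    Measure (EuclideanSpace ℝ (Fin n)) :=
  (μH[d] (V ∩ ball 0 1))⁻¹ • (μH[d]).restrict V

/-!
Rescale by `z ↦ r⁻¹ • (z - x)` and let `p` be the image of `y`, at distance `t` from `V`.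
The tent of height `s = min t (1/3)` at `p` is an admissible test function (its support stays in
`B(0,1)` because `‖p‖ < 2/3`) vanishing on `V`, so `W₁(μ_{x,r}, ν_V)` is at least its integral
against `μ_{x,r}`, which is at least `(s/2) μ(B(y, rs/2)) / μ(B(x,r))`. Doubling `k ≈ log₂(8/s)`
times around `y` bounds this below by `2 / (2C_δ)^k`, and `(2C_δ)^η = 2` turns that into
`W₁^η ≥ 2^{-k} ≥ s/8`.
-/

theorem measure_ball_le_pow_mul_of_doubling {α : Type*} [PseudoMetricSpace α] [MeasurableSpace α]
    {μ : Measure α} {C : ℝ≥0∞} {y : α}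
    (hμ : ∀ ρ > (0 : ℝ), μ (ball y (2 * ρ)) ≤ C * μ (ball y ρ)) (k : ℕ) {ρ : ℝ}
    (hρ : 0 < ρ) :
    μ (ball y ρ) ≤ C ^ k * μ (ball y (ρ / 2 ^ k)) := by
  induction k with
  | zero => simp
  | succ k ih =>
    calc μ (ball y ρ) ≤ C ^ k * μ (ball y (2 * (ρ / 2 ^ (k + 1)))) := by
          convert ih using 4; ring
      _ ≤ C ^ k * (C * μ (ball y (ρ / 2 ^ (k + 1)))) := by gcongr; exact hμ _ (by positivity)
      _ = C ^ (k + 1) * μ (ball y (ρ / 2 ^ (k + 1))) := by ring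

theorem inv_two_pow_le_rpow {Cδ η W : ℝ} (hCδ : 1 ≤ Cδ) (hη : (2 * Cδ) ^ η = 2) {k : ℕ}
    (hW : 2 / (2 * Cδ) ^ k ≤ W) : (2 ^ k)⁻¹ ≤ W ^ η := by
  have hη0 : 0 ≤ η := by
    by_contra! h
    linarith [Real.rpow_le_one_of_one_le_of_nonpos (by linarith : (1 : ℝ) ≤ 2 * Cδ) h.le]
  calc ((2 : ℝ) ^ k)⁻¹ ≤ 2 ^ η / 2 ^ k := by
        rw [inv_eq_one_div]; gcongr; exact Real.one_le_rpow one_le_two hη0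
    _ = (2 / (2 * Cδ) ^ k) ^ η := by
        rw [Real.div_rpow zero_le_two (by positivity), ← Real.rpow_natCast_mul (by positivity),
          mul_comm (k : ℝ), Real.rpow_mul_natCast (by positivity), hη]
    _ ≤ W ^ η := Real.rpow_le_rpow (by positivity) hW hη0

section Tent

variable {X : Type*} [PseudoMetricSpace X]

def tent (p : X) (s : ℝ) (u : X) : ℝ := max 0 (s - dist u p)

theorem tent_nonneg (p : X) (s : ℝ) (u : X) : 0 ≤ tent p s u := le_max_left _ _

theorem lipschitzWith_one_tent (p : X) (s : ℝ) : LipschitzWith 1 (tent p s) := by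
  have hsub : LipschitzWith 1 (fun a : ℝ => s - a) :=
    LipschitzWith.of_dist_le_mul fun a b => by
      rw [Real.dist_eq, Real.dist_eq, show s - a - (s - b) = -(a - b) by ring, abs_neg,
        NNReal.coe_one, one_mul]
  change LipschitzWith 1 fun u => max 0 (s - dist u p)
  simpa [Function.comp_def] using (hsub.comp (LipschitzWith.dist_left p)).const_max 0

theorem continuous_tent (p : X) (s : ℝ) : Continuous (tent p s) :=
  (lipschitzWith_one_tent p s).continuous

theorem tent_eq_zero_of_le_dist {p u : X} {s : ℝ} (h : s ≤ dist u p) : tent p s u = 0 :=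
  max_eq_left (by linarith)

theorem half_le_tent {p u : X} {s : ℝ} (hu : u ∈ ball p (s / 2)) : s / 2 ≤ tent p s u :=
  le_max_of_le_right (by rw [mem_ball] at hu; linarith)

theorem mul_measureReal_ball_le_integral_tent [ProperSpace X] [MeasurableSpace X]
    [OpensMeasurableSpace X] (μ : Measure X) [IsLocallyFiniteMeasure μ] (p : X) (s : ℝ) :
    s / 2 * μ.real (ball p (s / 2)) ≤ ∫ u, tent p s u ∂μ := by
  have hint : Integrable (tent p s) μ := by
    refine (continuous_tent p s).integrable_of_hasCompactSupport
      (HasCompactSupport.intro (isCompact_closedBall p s) fun u hu => ?_)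
    exact tent_eq_zero_of_le_dist (by simpa using (not_le.mp hu).le)
  calc s / 2 * μ.real (ball p (s / 2)) = μ.real (ball p (s / 2)) • (s / 2) := by
        rw [smul_eq_mul, mul_comm]
    _ ≤ ∫ u in ball p (s / 2), tent p s u ∂μ :=
        setIntegral_ge_of_const_le measurableSet_ball measure_ball_lt_top.ne
          (fun u hu => half_le_tent hu) hint.integrableOn
    _ ≤ ∫ u, tent p s u ∂μ :=
        setIntegral_le_integral hint (ae_of_all _ (tent_nonneg p s))

end Tent

section NormedSpace

variable {E : Type*} [NormedAddCommGroup E] [NormedSpace ℝ E] {r : ℝ}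

theorem dist_inv_smul_sub_inv_smul_sub (hr : 0 < r) (x y z : E) :
    dist (r⁻¹ • (z - x)) (r⁻¹ • (y - x)) = r⁻¹ * dist z y := by
  rw [dist_smul₀, dist_sub_right, Real.norm_of_nonneg (inv_nonneg.2 hr.le)]

theorem tent_inv_smul_sub (hr : 0 < r) (x y z : E) (s : ℝ) :
    tent (r⁻¹ • (y - x)) s (r⁻¹ • (z - x)) = r⁻¹ * tent y (r * s) z := by
  rw [tent, tent, dist_inv_smul_sub_inv_smul_sub hr, mul_max_of_nonneg _ _ (inv_nonneg.2 hr.le),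
    mul_zero, mul_sub, inv_mul_cancel_left₀ hr.ne']

theorem infDist_add_smul_image (hr : 0 < r) (x p : E) (V : Set E) :
    infDist (x + r • p) ((fun z => x + r • z) '' V) = r * infDist p V := by
  have hiso : Isometry (x + · : E → E) := isometry_vadd E x
  rw [← image_image (x + ·) (r • ·), Metric.infDist_image hiso, image_smul,
    infDist_smul₀ hr.ne', Real.norm_of_nonneg hr.le]

theorem abs_le_two_of_lipschitzWith_one [Nontrivial E] {ψ : E → ℝ} (hψ : LipschitzWith 1 ψ)
    (h0 : ∀ u ∉ ball (0 : E) 1, ψ u = 0) (u : E) : |ψ u| ≤ 2 := by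
  by_cases hu : u ∈ ball (0 : E) 1
  · obtain ⟨w, hw⟩ := exists_norm_eq E zero_le_one
    have hψw : ψ w = 0 := h0 w (by simp [hw])
    calc |ψ u| = dist (ψ u) (ψ w) := by rw [hψw, Real.dist_eq, sub_zero]
      _ ≤ dist u w := by simpa using hψ.dist_le_mul u w
      _ ≤ ‖u‖ + ‖w‖ := by rw [dist_eq_norm]; exact norm_sub_le u w
      _ ≤ 2 := by rw [mem_ball_zero_iff] at hu; linarith
  · simp [h0 u hu]

end NormedSpace

section Wasserstein

variable {n : ℕ} {μ ν : Measure (EuclideanSpace ℝ (Fin n))} {ψ : EuclideanSpace ℝ (Fin n) → ℝ}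
  {x y : EuclideanSpace ℝ (Fin n)} {r s d : ℝ} {V : Set (EuclideanSpace ℝ (Fin n))}

theorem W1_nonneg (μ ν : Measure (EuclideanSpace ℝ (Fin n))) : 0 ≤ W1 μ ν :=
  Real.sSup_nonneg (by rintro _ ⟨ψ, -, -, rfl⟩; exact abs_nonneg _)

theorem abs_integral_le_two_of_measure_ball_le_one [Nontrivial (EuclideanSpace ℝ (Fin n))]
    (hν : ν (ball 0 1) ≤ 1) (hψ : LipschitzWith 1 ψ) (h0 : ∀ u ∉ ball 0 1, ψ u = 0) :
    |∫ u, ψ u ∂ν| ≤ 2 := by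
  have hν' : ν.real (ball 0 1) ≤ 1 :=
    ENNReal.toReal_le_of_le_ofReal zero_le_one (by simpa using hν)
  rw [← setIntegral_eq_integral_of_forall_compl_eq_zero h0, ← Real.norm_eq_abs]
  calc ‖∫ u in ball 0 1, ψ u ∂ν‖ ≤ 2 * ν.real (ball 0 1) :=
        norm_setIntegral_le_of_norm_le_const (hν.trans_lt ENNReal.one_lt_top)
          fun u _ => abs_le_two_of_lipschitzWith_one hψ h0 u
    _ ≤ 2 := by linarith

theorem abs_integral_sub_le_W1 [Nontrivial (EuclideanSpace ℝ (Fin n))]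
    (hμ : μ (ball 0 1) ≤ 1) (hν : ν (ball 0 1) ≤ 1) (hψ : LipschitzWith 1 ψ)
    (h0 : ∀ u ∉ ball 0 1, ψ u = 0) : |(∫ u, ψ u ∂μ) - ∫ u, ψ u ∂ν| ≤ W1 μ ν := by
  refine le_csSup ⟨4, ?_⟩ ⟨ψ, hψ, h0, rfl⟩
  rintro _ ⟨φ, hφ, hφ0, rfl⟩
  linarith [abs_sub (∫ u, φ u ∂μ) (∫ u, φ u ∂ν),
    abs_integral_le_two_of_measure_ball_le_one hμ hφ hφ0,
    abs_integral_le_two_of_measure_ball_le_one hν hφ hφ0]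

theorem blowup_ball_le_one (μ : Measure (EuclideanSpace ℝ (Fin n))) (x) (hr : 0 < r) :
    blowup μ x r (ball 0 1) ≤ 1 := by
  have hpre : (fun z => r⁻¹ • (z - x)) ⁻¹' ball 0 1 = ball x r := by
    ext z
    have := dist_inv_smul_sub_inv_smul_sub hr x x z
    simp only [sub_self, smul_zero] at this
    rw [mem_preimage, mem_ball, mem_ball, this, inv_mul_lt_iff₀ hr, mul_one]
  rw [blowup, Measure.smul_apply, smul_eq_mul,
    Measure.map_apply (by fun_prop) measurableSet_ball, hpre]
  exact ENNReal.inv_mul_le_one _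

theorem integral_blowup (μ : Measure (EuclideanSpace ℝ (Fin n))) (x) (r : ℝ)
    (hψ : Continuous ψ) :
    ∫ u, ψ u ∂blowup μ x r = (μ.real (ball x r))⁻¹ * ∫ z, ψ (r⁻¹ • (z - x)) ∂μ := by
  rw [blowup, integral_smul_measure, integral_map (by fun_prop) hψ.aestronglyMeasurable,
    smul_eq_mul, ENNReal.toReal_inv, measureReal_def]

theorem nuV_ball_le_one (d : ℝ) (V : Set (EuclideanSpace ℝ (Fin n))) :
    nuV d V (ball 0 1) ≤ 1 := by
  rw [nuV, Measure.smul_apply, smul_eq_mul, Measure.restrict_apply measurableSet_ball,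
    inter_comm]
  exact ENNReal.inv_mul_le_one _

theorem integral_nuV_eq_zero (hψ : ∀ v ∈ V, ψ v = 0) : ∫ u, ψ u ∂nuV d V = 0 := by
  rw [nuV, integral_smul_measure, setIntegral_eq_zero_of_forall_eq_zero hψ, smul_zero]

variable [IsLocallyFiniteMeasure μ]

theorem le_W1_blowup_nuV [Nontrivial (EuclideanSpace ℝ (Fin n))] (hr : 0 < r) (hs : 0 < s)
    (hp : ‖r⁻¹ • (y - x)‖ + s ≤ 1) (hV : ∀ v ∈ V, s ≤ dist v (r⁻¹ • (y - x))) :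
    s / 2 * μ.real (ball y (r * s / 2)) / μ.real (ball x r) ≤ W1 (blowup μ x r) (nuV d V) := by
  set p := r⁻¹ • (y - x)
  have hsupp : ∀ u ∉ ball 0 1, tent p s u = 0 := fun u hu => tent_eq_zero_of_le_dist <| by
    have := norm_sub_norm_le u p
    rw [mem_ball_zero_iff, not_lt] at hu
    rw [dist_eq_norm]; linarith
  have hW := abs_integral_sub_le_W1 (blowup_ball_le_one μ x hr) (nuV_ball_le_one d V)
    (lipschitzWith_one_tent p s) hsupp
  rw [integral_nuV_eq_zero fun v hv => tent_eq_zero_of_le_dist (hV v hv), sub_zero,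
    integral_blowup μ x r (continuous_tent p s)] at hW
  simp only [p, tent_inv_smul_sub hr, integral_const_mul] at hW
  have hM : 0 ≤ (μ.real (ball x r))⁻¹ := inv_nonneg.2 measureReal_nonneg
  calc s / 2 * μ.real (ball y (r * s / 2)) / μ.real (ball x r)
      = (μ.real (ball x r))⁻¹ * (r⁻¹ * (r * s / 2 * μ.real (ball y (r * s / 2)))) := by
        field_simp
    _ ≤ (μ.real (ball x r))⁻¹ * (r⁻¹ * ∫ z, tent y (r * s) z ∂μ) := by
        gcongr
        exact mul_measureReal_ball_le_integral_tent μ y (r * s)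
    _ ≤ _ := (le_abs_self _).trans hW

theorem two_div_pow_le_W1_blowup_nuV [Nontrivial (EuclideanSpace ℝ (Fin n))] {Cδ : ℝ}
    (hCδ : 0 < Cδ)
    (hdbl : ∀ ρ > (0 : ℝ), μ (ball y (2 * ρ)) ≤ ENNReal.ofReal Cδ * μ (ball y ρ))
    (hy : ∀ ρ > (0 : ℝ), 0 < μ (ball y ρ)) (hx : 0 < μ (ball x r)) (hr : 0 < r)
    (hxy : dist x y < r) (hs : 0 < s) (hp : ‖r⁻¹ • (y - x)‖ + s ≤ 1)
    (hV : ∀ v ∈ V, s ≤ dist v (r⁻¹ • (y - x))) {k : ℕ} (hk : 4 / s ≤ 2 ^ k) :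
    2 / (2 * Cδ) ^ k ≤ W1 (blowup μ x r) (nuV d V) := by
  set Q := μ.real (ball y (r * s / 2))
  set M := μ.real (ball x r)
  have hQ : 0 < Q := ENNReal.toReal_pos (hy _ (by positivity)).ne' measure_ball_lt_top.ne
  have hM : 0 < M := ENNReal.toReal_pos hx.ne' measure_ball_lt_top.ne
  have hrad : 2 * r / 2 ^ k ≤ r * s / 2 := by
    rw [div_le_iff₀ hs] at hk
    rw [div_le_iff₀ (by positivity)]
    nlinarith
  have hMQ : M ≤ Cδ ^ k * Q := by
    have := calc μ (ball x r) ≤ μ (ball y (2 * r)) :=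
          measure_mono (ball_subset_ball' (by linarith))
      _ ≤ ENNReal.ofReal Cδ ^ k * μ (ball y (2 * r / 2 ^ k)) :=
          measure_ball_le_pow_mul_of_doubling hdbl k (by positivity)
      _ ≤ ENNReal.ofReal Cδ ^ k * μ (ball y (r * s / 2)) := by gcongr
    have := ENNReal.toReal_mono (by finiteness) this
    rwa [ENNReal.toReal_mul, ENNReal.toReal_pow, ENNReal.toReal_ofReal hCδ.le] at this
  have h2s : 2 / 2 ^ k ≤ s / 2 := by
    rw [div_le_iff₀ hs] at hk
    rw [div_le_iff₀ (by positivity)]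
    nlinarith
  calc 2 / (2 * Cδ) ^ k = 2 / 2 ^ k / Cδ ^ k := by rw [mul_pow, div_div]
    _ ≤ s / 2 / Cδ ^ k := by gcongr
    _ ≤ s / 2 * Q / M := by
        rw [div_le_div_iff₀ (by positivity) hM, mul_assoc, mul_comm Q]
        gcongr
    _ ≤ W1 (blowup μ x r) (nuV d V) := le_W1_blowup_nuV hr hs hp hV

theorem infDist_le_W1_rpow {Cδ η : ℝ} (hCδ : 1 ≤ Cδ) (hη : (2 * Cδ) ^ η = 2)
    (hdbl : ∀ ρ > (0 : ℝ), μ (ball y (2 * ρ)) ≤ ENNReal.ofReal Cδ * μ (ball y ρ))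
    (hy : ∀ ρ > (0 : ℝ), 0 < μ (ball y ρ)) (hx : 0 < μ (ball x r)) (hr : 0 < r)
    (hyx : dist y x < 2 * r / 3) (hV : (V ∩ ball 0 (1 / 2)).Nonempty) :
    infDist (r⁻¹ • (y - x)) V ≤ 28 * W1 (blowup μ x r) (nuV d V) ^ η := by
  set p := r⁻¹ • (y - x)
  have hp : ‖p‖ < 2 / 3 := by
    have := dist_inv_smul_sub_inv_smul_sub hr x x y
    simp only [sub_self, smul_zero, dist_zero_right] at this
    rw [this]
    calc r⁻¹ * dist y x < r⁻¹ * (2 * r / 3) := by gcongr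
      _ = 2 / 3 := by field_simp
  obtain ⟨z₀, hz₀V, hz₀⟩ := hV
  rw [mem_ball_zero_iff] at hz₀
  set t := infDist p V
  have htz₀ : t ≤ dist p z₀ := infDist_le_dist_of_mem hz₀V
  have ht : t < 7 / 6 := by
    have := norm_sub_le p z₀
    rw [dist_eq_norm] at htz₀
    linarith
  rcases (infDist_nonneg : 0 ≤ t).eq_or_lt with ht0 | ht0
  · rw [show t = 0 from ht0.symm]
    exact mul_nonneg (by norm_num) (Real.rpow_nonneg (W1_nonneg _ _) _)
  have : Nontrivial (EuclideanSpace ℝ (Fin n)) :=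
    nontrivial_of_ne p z₀ fun h => by rw [h, dist_self] at htz₀; linarith
  set s := min t (1 / 3)
  have hs : 0 < s := lt_min ht0 (by norm_num)
  have hts : t ≤ 7 / 2 * s := by
    rcases min_choice t (1 / 3) with h | h <;> simp only [s, h] <;> linarith
  obtain ⟨m, hm, hm'⟩ := exists_nat_pow_near
    (show 1 ≤ 4 / s by rw [le_div_iff₀ hs]; linarith [min_le_right t (1 / 3)]) one_lt_two
  have hV' : ∀ v ∈ V, s ≤ dist v p := fun v hv =>
    (min_le_left t _).trans (dist_comm p v ▸ infDist_le_dist_of_mem hv)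
  have hW := inv_two_pow_le_rpow hCδ hη <| two_div_pow_le_W1_blowup_nuV (d := d) (by linarith)
    hdbl hy hx hr (by rw [dist_comm]; linarith) hs (by linarith [min_le_right t (1 / 3)]) hV'
    hm'.le
  have hsk : s ≤ 8 * (2 ^ (m + 1) : ℝ)⁻¹ := by
    rw [le_div_iff₀ hs] at hm
    rw [pow_succ, ← div_eq_mul_inv, le_div_iff₀ (by positivity)]
    nlinarith
  linarith

end Wasserstein

/-- Let `μ` be doubling with constant `C_δ`, `η` satisfy `(2C_δ)^η = 2`.  Then there is a
constant `C` depending only on `C_δ` such that whenever `x ∈ Σ`, `r > 0`, `V` is a `d`-plane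
meeting `B(0,1/2)`, and `W = x + rV`, every `y ∈ Σ ∩ B(x, 2r/3)` satisfies
`dist(y, W) ≤ C · W₁(μ_{x,r}, ν_V)^η · r`. -/
theorem stmt_5 (Cδ : ℝ) (hCδ : 1 ≤ Cδ) (η : ℝ) (hη : (2 * Cδ) ^ η = 2) :
    ∃ C > (0 : ℝ), ∀ (n d : ℕ), d ≤ n →
      ∀ (μ : Measure (EuclideanSpace ℝ (Fin n))) [IsLocallyFiniteMeasure μ],
      ∀ S : Set (EuclideanSpace ℝ (Fin n)),
        S = {x | ∀ ρ > 0, 0 < μ (ball x ρ)} →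
        (∀ x ∈ S, ∀ ρ > (0 : ℝ), μ (ball x (2 * ρ)) ≤ ENNReal.ofReal Cδ * μ (ball x ρ)) →
        ∀ x ∈ S, ∀ r > (0 : ℝ),
        ∀ V : AffineSubspace ℝ (EuclideanSpace ℝ (Fin n)),
          Module.finrank ℝ V.direction = d →
          ((V : Set (EuclideanSpace ℝ (Fin n))) ∩ ball 0 (1/2)).Nonempty →
          ∀ y ∈ S ∩ ball x (2 * r / 3),
            infDist y ((fun z => x + r • z) '' (V : Set (EuclideanSpace ℝ (Fin n))))
              ≤ C * (W1 (blowup μ x r) (nuV (d : ℝ) (V : Set (EuclideanSpace ℝ (Fin n))))) ^ η * r := by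
  refine ⟨28, by norm_num, fun n d _ μ _ S hS hdbl x hx r hr V _ hV y ⟨hyS, hyx⟩ => ?_⟩
  subst hS
  have hy : x + r • (r⁻¹ • (y - x)) = y := by rw [smul_inv_smul₀ hr.ne', add_sub_cancel]
  rw [← hy, infDist_add_smul_image hr, mul_comm _ r]
  gcongr
  exact infDist_le_W1_rpow hCδ hη (hdbl y hyS) hyS (hx r hr) hr (mem_ball.mp hyx) hV
end
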